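/- Let G be a connected Lie group acting smoothly, properly and isometrically on a Euclidean space ℝⁿ such that every orbit of maximal dimension has a globally flat normal bundle admitting a global parallel orthonormal normal frame that is G-equivariant near the identity. Then every orbit of maximal dimension is principal, i.e., the action has no exceptional orbits. -/

import Mathlib

/-!
Fix `p` of maximal dimension and a vector `ξ` of its parallel normal frame. The set of `g ∈ G`
with `ξ (g • p) = dg (ξ p)` contains `1`, is closed by continuity, and is open because the frame
is equivariant near the identity at every point of the orbit. As `G` is connected this set is all
of `G`; in particular the stabilizer of `p` fixes the frame at `p`, so the slice representation
is trivial and the orbit is principal.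
-/

open Filter Topology

theorem forall_of_isClosed_of_eventually_mul {G : Type*} [TopologicalSpace G] [Group G]
    [IsTopologicalGroup G] [ConnectedSpace G] {P : G → Prop} (hclosed : IsClosed {g | P g})
    (hone : P 1) (hmul : ∀ g, P g → ∀ᶠ u in 𝓝 1, P (u * g)) (g : G) : P g := by
  have hopen : IsOpen {g | P g} := isOpen_iff_mem_nhds.2 fun g hg => by
    rw [← map_mul_right_nhds_one g]
    exact hmul g hg
  exact Set.eq_univ_iff_forall.1 (IsClopen.eq_univ ⟨hclosed, hopen⟩ ⟨1, hone⟩) g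

namespace AffineIsometryEquiv
variable {𝕜 V P : Type*} [NormedField 𝕜] [SeminormedAddCommGroup V] [NormedSpace 𝕜 V]
  [PseudoMetricSpace P] [NormedAddTorsor V P]

@[simp]
theorem linearIsometryEquiv_mul_apply (e e' : P ≃ᵃⁱ[𝕜] P) (v : V) :
    (e * e').linearIsometryEquiv v = e.linearIsometryEquiv (e'.linearIsometryEquiv v) :=
  rfl

@[simp]
theorem linearIsometryEquiv_one_apply (v : V) :
    (1 : P ≃ᵃⁱ[𝕜] P).linearIsometryEquiv v = v :=
  rfl

theorem linearIsometryEquiv_apply_eq_vsub (e : P ≃ᵃⁱ[𝕜] P) (v : V) (x : P) :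
    e.linearIsometryEquiv v = e (v +ᵥ x) -ᵥ e x := by
  rw [e.map_vadd, _root_.vadd_vsub]

theorem continuous_linearIsometryEquiv_apply {X : Type*} [TopologicalSpace X]
    {ρ : X → P ≃ᵃⁱ[𝕜] P} (hρ : ∀ x, Continuous fun a => ρ a x) (v : V) :
    Continuous fun a => (ρ a).linearIsometryEquiv v := by
  obtain ⟨x⟩ := AddTorsor.nonempty (G := V) (P := P)
  simp only [linearIsometryEquiv_apply_eq_vsub _ v x]
  exact (hρ _).vsub (hρ x)

end AffineIsometryEquiv

section
variable {𝕜 V P G : Type*} [NormedField 𝕜] [NormedAddCommGroup V] [NormedSpace 𝕜 V]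
  [PseudoMetricSpace P] [NormedAddTorsor V P]
  [TopologicalSpace G] [Group G] [IsTopologicalGroup G] [ConnectedSpace G]

open AffineIsometryEquiv

theorem apply_eq_linearIsometryEquiv_of_eventually (ρ : G →* (P ≃ᵃⁱ[𝕜] P))
    (hρ : ∀ x, Continuous fun g => ρ g x) {ξ : P → V} (hξ : Continuous ξ) {p : P}
    (hloc : ∀ g, ∀ᶠ u in 𝓝 1,
      ξ (ρ u (ρ g p)) = (ρ u).linearIsometryEquiv (ξ (ρ g p))) (g : G) :
    ξ (ρ g p) = (ρ g).linearIsometryEquiv (ξ p) := by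
  refine forall_of_isClosed_of_eventually_mul
    (P := fun g => ξ (ρ g p) = (ρ g).linearIsometryEquiv (ξ p)) ?closed ?one ?mul g
  case closed => exact isClosed_eq (hξ.comp (hρ p)) (continuous_linearIsometryEquiv_apply hρ _)
  case one => simp
  case mul =>
    intro g hg
    filter_upwards [hloc g] with u hu
    simp only [map_mul, linearIsometryEquiv_mul_apply, coe_mul, Function.comp_apply, ← hg, hu]

end

theorem stmt11_general {n : ℕ} {G : Type*} [TopologicalSpace G] [Group G] [IsTopologicalGroup G]
    [ConnectedSpace G]
    (ρ : G →* (EuclideanSpace ℝ (Fin n) ≃ᵃⁱ[ℝ] EuclideanSpace ℝ (Fin n)))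
    (hcont : Continuous fun gx : G × EuclideanSpace ℝ (Fin n) => ρ gx.1 gx.2)
    (MaxDim : Set (EuclideanSpace ℝ (Fin n)))
    (hframe : ∀ p ∈ MaxDim, ∃ (k : ℕ)
        (ξ : Fin k → EuclideanSpace ℝ (Fin n) → EuclideanSpace ℝ (Fin n)),
      -- continuity of the frame
      (∀ i, Continuous (ξ i)) ∧
      -- orthonormality along the orbit of p
      (∀ q, (∃ g : G, ρ g p = q) → ∀ i j,
        (inner ℝ (ξ i q) (ξ j q) : ℝ) = if i = j then 1 else 0) ∧
      -- the frame is parallel: G-equivariant near the identity at each point of the orbit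
      (∀ q, (∃ g : G, ρ g p = q) → ∃ U ∈ nhds (1 : G), ∀ g ∈ U, ∀ i,
        ξ i (ρ g q) = (ρ g).linearIsometryEquiv (ξ i q)) ∧
      -- the frame spans the normal bundle: if the stabilizer fixes the frame
      -- (trivial slice representation) then the orbit is principal
      (∀ q, (∃ g : G, ρ g p = q) →
        ((∀ g : G, ρ g q = q → ∀ i, (ρ g).linearIsometryEquiv (ξ i q) = ξ i q) →
          ∃ U ∈ nhds q, ∀ r ∈ U, ∃ g : G, ∀ h : G, ρ h q = q → ρ (g⁻¹ * h * g) r = r))) :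
    ∀ p ∈ MaxDim, ∃ U ∈ nhds p, ∀ r ∈ U, ∃ g : G, ∀ h : G,
      ρ h p = p → ρ (g⁻¹ * h * g) r = r := by
  intro p hp
  obtain ⟨k, ξ, hξ, -, hparallel, hspan⟩ := hframe p hp
  have hρ : ∀ x, Continuous fun g => ρ g x := fun x =>
    hcont.comp (continuous_id.prodMk continuous_const)
  refine hspan p ⟨1, by simp⟩ fun g hg i => ?_
  have hloc : ∀ g, ∀ᶠ u in 𝓝 1,
      ξ i (ρ u (ρ g p)) = (ρ u).linearIsometryEquiv (ξ i (ρ g p)) := fun g => by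
    obtain ⟨U, hU, hUeq⟩ := hparallel _ ⟨g, rfl⟩
    exact eventually_of_mem hU fun u hu => hUeq u hu i
  simpa [hg] using (apply_eq_linearIsometryEquiv_of_eventually ρ hρ (hξ i) hloc g).symm

/-- Let `G` be a connected Lie group acting properly and isometrically (by affine
isometries `ρ`) on Euclidean space `ℝⁿ`, such that every orbit of maximal dimension (points of
the `G`-invariant set `MaxDim`) carries a globally defined continuous orthonormal normal frame
`ξ` which is parallel, `G`-equivariant near the identity, and spans the normal bundle (so that
triviality of the slice representation on the frame implies the orbit is principal). Then every
orbit of maximal dimension is principal, i.e. the action has no exceptional orbits: for each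
`p ∈ MaxDim` there is a neighborhood `U` of `p` such that for every `r ∈ U` the stabilizer of
`p` is conjugate into the stabilizer of `r`. -/
theorem stmt11 {n : ℕ} {G : Type*} [TopologicalSpace G] [Group G] [IsTopologicalGroup G]
    [ConnectedSpace G]
    (ρ : G →* (EuclideanSpace ℝ (Fin n) ≃ᵃⁱ[ℝ] EuclideanSpace ℝ (Fin n)))
    (hcont : Continuous fun gx : G × EuclideanSpace ℝ (Fin n) => ρ gx.1 gx.2)
    (hproper : IsProperMap fun gx : G × EuclideanSpace ℝ (Fin n) => (ρ gx.1 gx.2, gx.2))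
    (MaxDim : Set (EuclideanSpace ℝ (Fin n)))
    (hinv : ∀ g : G, ∀ p ∈ MaxDim, ρ g p ∈ MaxDim)
    (hframe : ∀ p ∈ MaxDim, ∃ (k : ℕ)
        (ξ : Fin k → EuclideanSpace ℝ (Fin n) → EuclideanSpace ℝ (Fin n)),
      -- continuity of the frame
      (∀ i, Continuous (ξ i)) ∧
      -- orthonormality along the orbit of p
      (∀ q, (∃ g : G, ρ g p = q) → ∀ i j,
        (inner ℝ (ξ i q) (ξ j q) : ℝ) = if i = j then 1 else 0) ∧
      -- the frame is parallel: G-equivariant near the identity at each point of the orbit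
      (∀ q, (∃ g : G, ρ g p = q) → ∃ U ∈ nhds (1 : G), ∀ g ∈ U, ∀ i,
        ξ i (ρ g q) = (ρ g).linearIsometryEquiv (ξ i q)) ∧
      -- the frame spans the normal bundle: if the stabilizer fixes the frame
      -- (trivial slice representation) then the orbit is principal
      (∀ q, (∃ g : G, ρ g p = q) →
        ((∀ g : G, ρ g q = q → ∀ i, (ρ g).linearIsometryEquiv (ξ i q) = ξ i q) →
          ∃ U ∈ nhds q, ∀ r ∈ U, ∃ g : G, ∀ h : G, ρ h q = q → ρ (g⁻¹ * h * g) r = r))) :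
    ∀ p ∈ MaxDim, ∃ U ∈ nhds p, ∀ r ∈ U, ∃ g : G, ∀ h : G,
      ρ h p = p → ρ (g⁻¹ * h * g) r = r :=
  stmt11_general ρ hcont MaxDim hframe
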